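/- arXiv:1107.5973 — 5 statements merged into one kernel-verified Lean document; each statement's English description precedes it below -/
import Mathlib

section
/- Let G be a group, X a finite subgroup of G, and c ∈ G with c ∉ X. Then 2·|X| ≤ |Q(X ∪ {c})| ≤ 3·|X|. -/
open Pointwise

/-- The right quotient `Q(X) = {x y⁻¹ : x, y ∈ X}` of a subset of a group. -/
def rightQuotient {G : Type*} [Group G] (X : Set G) : Set G :=
  {g | ∃ x ∈ X, ∃ y ∈ X, g = x * y⁻¹}

/-- Subsets `S, T, U` of a group satisfy the Triple Product Property if for all
`s ∈ Q(S)`, `t ∈ Q(T)`, `u ∈ Q(U)`, `s * t * u = 1` iff `s = t = u = 1`. -/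
def TPP {G : Type*} [Group G] (S T U : Set G) : Prop :=
  ∀ s ∈ rightQuotient S, ∀ t ∈ rightQuotient T, ∀ u ∈ rightQuotient U,
    (s * t * u = 1 ↔ s = 1 ∧ t = 1 ∧ u = 1)

/-!
With `Q(X) = X / X`, distributing over `H ∪ {c}` gives `Q(H ∪ {c}) = H ∪ H c⁻¹ ∪ c H`, each piece
of size `|H|`. Since `c ∉ H`, the right coset `H c⁻¹` is disjoint from `H`, which gives the lower
bound; the upper bound is the union bound.
-/

section

variable {G : Type*} [Group G]

theorem rightQuotient_eq_div (X : Set G) : rightQuotient X = X / X := by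
  ext g
  rw [Set.mem_div]
  simp [rightQuotient, div_eq_mul_inv, eq_comm]

theorem rightQuotient_union_singleton (X : Set G) (c : G) :
    rightQuotient (X ∪ {c}) = insert 1 (X / X ∪ (· / c) '' X ∪ (c / ·) '' X) := by
  rw [rightQuotient_eq_div, Set.union_div, Set.div_union, Set.div_union, Set.div_singleton,
    Set.singleton_div, Set.singleton_div_singleton, div_self']
  ext g
  simp only [Set.mem_insert_iff, Set.mem_union, Set.mem_singleton_iff]
  tauto

theorem rightQuotient_coe_subgroup_union_singleton (H : Subgroup G) (c : G) :
    rightQuotient ((H : Set G) ∪ {c}) = (H : Set G) ∪ (· / c) '' H ∪ (c / ·) '' H := by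
  rw [rightQuotient_union_singleton, coe_div_coe,
    Set.insert_eq_of_mem (Set.mem_union_left _ (Set.mem_union_left _ H.one_mem))]

theorem Subgroup.disjoint_image_div_of_notMem {H : Subgroup G} {c : G} (hc : c ∉ H) :
    Disjoint (H : Set G) ((· / c) '' H) := by
  rw [Set.disjoint_left]
  rintro _ hxc ⟨x, hx, rfl⟩
  exact hc (by simpa [div_eq_mul_inv] using H.mul_mem (H.inv_mem hx) hxc)

end

theorem stmt_3 {G : Type*} [Group G] (X : Subgroup G) (hfin : (X : Set G).Finite)
    (c : G) (hc : c ∉ X) :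
    2 * (X : Set G).ncard ≤ (rightQuotient ((X : Set G) ∪ {c})).ncard ∧
      (rightQuotient ((X : Set G) ∪ {c})).ncard ≤ 3 * (X : Set G).ncard := by
  set R := (· / c) '' (X : Set G)
  set L := (c / ·) '' (X : Set G)
  have hR : R.ncard = (X : Set G).ncard := Set.ncard_image_of_injective _ div_left_injective
  have hL : L.ncard = (X : Set G).ncard := Set.ncard_image_of_injective _ div_right_injective
  rw [rightQuotient_coe_subgroup_union_singleton]
  constructor
  · calc 2 * (X : Set G).ncard = ((X : Set G) ∪ R).ncard := by
          rw [Set.ncard_union_eq (Subgroup.disjoint_image_div_of_notMem hc) hfin (hfin.image _),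
            hR, two_mul]
      _ ≤ _ := Set.ncard_le_ncard Set.subset_union_left
          ((hfin.union (hfin.image _)).union (hfin.image _))
  · calc _ ≤ ((X : Set G) ∪ R).ncard + L.ncard := Set.ncard_union_le _ _
      _ ≤ (X : Set G).ncard + R.ncard + L.ncard := by gcongr; exact Set.ncard_union_le _ _
      _ = 3 * (X : Set G).ncard := by rw [hR, hL]; ring
end

section
/- Let G be a finite group and let (S, T, U) be a TPP triple of nonempty subsets of G. Then |Q(S)| + |Q(T)| + |Q(U)| ≤ |G| + 2. -/
/-!
If `s ∈ Q(S) ∩ Q(T)` then `s · s⁻¹ · 1 = 1` is a product over `Q(S) × Q(T) × Q(U)`, so the TPP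
forces `s = 1`; likewise for the other two pairs. Thus `Q(S)`, `Q(T)`, `Q(U)` meet pairwise only
in `1`, and three subsets of `G` with pairwise intersections inside a common singleton have
total size at most `|G| + 2`.
-/

open Pointwise

theorem Set.ncard_add_ncard_add_ncard_le_of_inter_subset_singleton {α : Type*} [Finite α]
    {A B C : Set α} {a : α} (hAB : A ∩ B ⊆ {a}) (hAC : A ∩ C ⊆ {a}) (hBC : B ∩ C ⊆ {a}) :
    A.ncard + B.ncard + C.ncard ≤ Nat.card α + 2 := by
  have hAB' : (A ∩ B).ncard ≤ 1 := (Set.ncard_le_ncard hAB).trans_eq (Set.ncard_singleton a)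
  have hABC' : ((A ∪ B) ∩ C).ncard ≤ 1 := by
    rw [Set.union_inter_distrib_right]
    exact (Set.ncard_le_ncard (Set.union_subset hAC hBC)).trans_eq (Set.ncard_singleton a)
  have := Set.ncard_union_add_ncard_inter A B
  have := Set.ncard_union_add_ncard_inter (A ∪ B) C
  have := Set.ncard_le_card (A ∪ B ∪ C)
  omega

section rightQuotient

variable {G : Type*} [Group G] {X : Set G}

theorem one_mem_rightQuotient (hX : X.Nonempty) : (1 : G) ∈ rightQuotient X := by
  obtain ⟨x, hx⟩ := hX
  exact ⟨x, hx, x, hx, (mul_inv_cancel x).symm⟩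

theorem inv_mem_rightQuotient {g : G} (hg : g ∈ rightQuotient X) : g⁻¹ ∈ rightQuotient X := by
  obtain ⟨x, hx, y, hy, rfl⟩ := hg
  exact ⟨y, hy, x, hx, by group⟩

end rightQuotient

namespace TPP

variable {G : Type*} [Group G] {S T U : Set G}

theorem rightQuotient_inter_subset_one₁₂ (h : TPP S T U) (hU : U.Nonempty) :
    rightQuotient S ∩ rightQuotient T ⊆ {1} := fun s ⟨hsS, hsT⟩ =>
  ((h s hsS s⁻¹ (inv_mem_rightQuotient hsT) 1 (one_mem_rightQuotient hU)).mp (by group)).1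

theorem rightQuotient_inter_subset_one₁₃ (h : TPP S T U) (hT : T.Nonempty) :
    rightQuotient S ∩ rightQuotient U ⊆ {1} := fun s ⟨hsS, hsU⟩ =>
  ((h s hsS 1 (one_mem_rightQuotient hT) s⁻¹ (inv_mem_rightQuotient hsU)).mp (by group)).1

theorem rightQuotient_inter_subset_one₂₃ (h : TPP S T U) (hS : S.Nonempty) :
    rightQuotient T ∩ rightQuotient U ⊆ {1} := fun t ⟨htT, htU⟩ =>
  ((h 1 (one_mem_rightQuotient hS) t htT t⁻¹ (inv_mem_rightQuotient htU)).mp (by group)).2.1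

end TPP

theorem stmt_6 {G : Type*} [Group G] [Finite G] (S T U : Set G)
    (hS : S.Nonempty) (hT : T.Nonempty) (hU : U.Nonempty) (h : TPP S T U) :
    (rightQuotient S).ncard + (rightQuotient T).ncard + (rightQuotient U).ncard ≤
      Nat.card G + 2 :=
  Set.ncard_add_ncard_add_ncard_le_of_inter_subset_singleton
    (h.rightQuotient_inter_subset_one₁₂ hU) (h.rightQuotient_inter_subset_one₁₃ hT)
    (h.rightQuotient_inter_subset_one₂₃ hS)
end

section
/- Let G be a finite group and let (S, T, U) be a TPP triple of nonempty subsets of G. Then |S|·(|T| + |U| − 1) ≤ |G|, |T|·(|S| + |U| − 1) ≤ |G|, and |U|·(|S| + |T| − 1) ≤ |G|. -/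
/-!
Fix `t₀ ∈ T`, `u₀ ∈ U`. By the triple product property the maps `(s, t) ↦ s⁻¹ t t₀⁻¹` on `S × T`
and `(s, u) ↦ s⁻¹ u u₀⁻¹` on `S × U` are injective, and their images meet only in `S⁻¹`.
Inclusion–exclusion in `G` then gives `|S||T| + |S||U| - |S| ≤ |G|`. The other two inequalities
follow since the triple product property is invariant under cyclic permutations.
-/

open Pointwise

theorem Set.ncard_add_ncard_le_card_add {α : Type*} [Finite α] {A B C : Set α}
    (hABC : A ∩ B ⊆ C) : A.ncard + B.ncard ≤ Nat.card α + C.ncard := by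
  rw [← Set.ncard_union_add_ncard_inter A B]
  exact add_le_add (Set.ncard_le_card _) (Set.ncard_le_ncard hABC)

section

variable {G : Type*} [Group G]

theorem mul_inv_mem_rightQuotient {X : Set G} {a b : G} (ha : a ∈ X) (hb : b ∈ X) :
    a * b⁻¹ ∈ rightQuotient X :=
  ⟨a, ha, b, hb, rfl⟩

theorem ncard_image_inv_mul_mul {S X : Set G} [Finite G] (c : G)
    (hSX : ∀ s ∈ S, ∀ s' ∈ S, ∀ x ∈ X, ∀ x' ∈ X, s * s'⁻¹ * (x * x'⁻¹) = 1 → s = s' ∧ x = x') :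
    ((fun p : G × G => p.1⁻¹ * p.2 * c) '' (S ×ˢ X)).ncard = S.ncard * X.ncard := by
  rw [Set.InjOn.ncard_image, Set.ncard_prod]
  rintro ⟨s₁, x₁⟩ ⟨hs₁, hx₁⟩ ⟨s₂, x₂⟩ ⟨hs₂, hx₂⟩ e
  have e' : s₁⁻¹ * x₁ = s₂⁻¹ * x₂ := mul_right_cancel e
  have hprod : s₂ * s₁⁻¹ * (x₁ * x₂⁻¹) = 1 := by
    rw [mul_assoc, ← mul_assoc s₁⁻¹, e']
    group
  obtain ⟨rfl, rfl⟩ := hSX s₂ hs₂ s₁ hs₁ x₁ hx₁ x₂ hx₂ hprod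
  rfl

namespace TPP

variable {S T U : Set G}

theorem rotate (h : TPP S T U) : TPP T U S := by
  intro t ht u hu s hs
  rw [mul_eq_one_comm, ← mul_assoc, h s hs t ht u hu]
  tauto

theorem eq_of_mul_eq_one (h : TPP S T U) {s s' t t' u u' : G} (hs : s ∈ S) (hs' : s' ∈ S)
    (ht : t ∈ T) (ht' : t' ∈ T) (hu : u ∈ U) (hu' : u' ∈ U)
    (e : s * s'⁻¹ * (t * t'⁻¹) * (u * u'⁻¹) = 1) : s = s' ∧ t = t' ∧ u = u' := by
  simpa only [mul_inv_eq_one] using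
    (h _ (mul_inv_mem_rightQuotient hs hs') _ (mul_inv_mem_rightQuotient ht ht') _
      (mul_inv_mem_rightQuotient hu hu')).1 e

theorem inter_image_subset_inv (h : TPP S T U) {t₀ u₀ : G} (ht₀ : t₀ ∈ T) (hu₀ : u₀ ∈ U) :
    (fun p : G × G => p.1⁻¹ * p.2 * t₀⁻¹) '' (S ×ˢ T) ∩
      (fun p : G × G => p.1⁻¹ * p.2 * u₀⁻¹) '' (S ×ˢ U) ⊆ S⁻¹ := by
  rintro _ ⟨⟨⟨s, t⟩, ⟨hs, ht⟩, rfl⟩, ⟨⟨s', u⟩, ⟨hs', hu⟩, e⟩⟩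
  have hprod : s' * s⁻¹ * (t * t₀⁻¹) * (u₀ * u⁻¹) = 1 :=
    calc _ = s' * (s⁻¹ * t * t₀⁻¹) * (s'⁻¹ * u * u₀⁻¹)⁻¹ * s'⁻¹ := by group
      _ = 1 := by rw [show s'⁻¹ * u * u₀⁻¹ = s⁻¹ * t * t₀⁻¹ from e]; group
  obtain ⟨-, rfl, -⟩ := h.eq_of_mul_eq_one hs' hs ht ht₀ hu₀ hu hprod
  simpa using hs

theorem ncard_mul_le [Finite G] (h : TPP S T U) (hT : T.Nonempty) (hU : U.Nonempty) :
    S.ncard * (T.ncard + U.ncard - 1) ≤ Nat.card G := by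
  obtain ⟨t₀, ht₀⟩ := hT
  obtain ⟨u₀, hu₀⟩ := hU
  have hST := ncard_image_inv_mul_mul (S := S) (X := T) t₀⁻¹ fun s hs s' hs' t ht t' ht' e =>
    (h.eq_of_mul_eq_one hs hs' ht ht' hu₀ hu₀ (by rwa [mul_inv_cancel, mul_one])).imp_right
      And.left
  have hSU := ncard_image_inv_mul_mul (S := S) (X := U) u₀⁻¹ fun s hs s' hs' u hu u' hu' e =>
    (h.eq_of_mul_eq_one hs hs' ht₀ ht₀ hu hu' (by rwa [mul_inv_cancel, mul_one])).imp_right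
      And.right
  have hcount := Set.ncard_add_ncard_le_card_add (h.inter_image_subset_inv ht₀ hu₀)
  rw [hST, hSU, Set.ncard_inv] at hcount
  rw [Nat.mul_sub_one, mul_add]
  omega

end TPP

end

theorem stmt_7 {G : Type*} [Group G] [Finite G] (S T U : Set G)
    (hS : S.Nonempty) (hT : T.Nonempty) (hU : U.Nonempty) (h : TPP S T U) :
    S.ncard * (T.ncard + U.ncard - 1) ≤ Nat.card G ∧
      T.ncard * (S.ncard + U.ncard - 1) ≤ Nat.card G ∧
      U.ncard * (S.ncard + T.ncard - 1) ≤ Nat.card G := by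
  refine ⟨h.ncard_mul_le hT hU, ?_, h.rotate.rotate.ncard_mul_le hS hT⟩
  rw [add_comm S.ncard]
  exact h.rotate.ncard_mul_le hU hS
end

section
/- Let G be a finite abelian group and let (S, T, U) be a TPP triple of nonempty subsets of G. Then |S|·|T|·|U| ≤ |G|. -/
open Pointwise

theorem mul_inv_mem_rightQuotient_s12 {G : Type*} [Group G] {X : Set G} {x y : G}
    (hx : x ∈ X) (hy : y ∈ X) : x * y⁻¹ ∈ rightQuotient X :=
  ⟨x, hx, y, hy, rfl⟩

theorem TPP.injective_mul {G : Type*} [CommGroup G] {S T U : Set G} (h : TPP S T U) :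
    Function.Injective fun x : S × T × U => (x.1 : G) * x.2.1 * x.2.2 := by
  rintro ⟨⟨s, hs⟩, ⟨t, ht⟩, ⟨u, hu⟩⟩ ⟨⟨s', hs'⟩, ⟨t', ht'⟩, ⟨u', hu'⟩⟩ heq
  have hquot : (s * s'⁻¹) * (t * t'⁻¹) * (u * u'⁻¹) = 1 := by
    calc (s * s'⁻¹) * (t * t'⁻¹) * (u * u'⁻¹) = (s * t * u) * (s' * t' * u')⁻¹ := by
          simp only [mul_inv]; ac_rfl
      _ = 1 := mul_inv_eq_one.mpr heq
  obtain ⟨hss', htt', huu'⟩ :=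
    (h _ (mul_inv_mem_rightQuotient_s12 hs hs') _ (mul_inv_mem_rightQuotient_s12 ht ht') _
      (mul_inv_mem_rightQuotient_s12 hu hu')).mp hquot
  obtain rfl := mul_inv_eq_one.mp hss'
  obtain rfl := mul_inv_eq_one.mp htt'
  obtain rfl := mul_inv_eq_one.mp huu'
  rfl

theorem stmt_12_general {G : Type*} [CommGroup G] [Finite G] (S T U : Set G)
    (h : TPP S T U) :
    S.ncard * T.ncard * U.ncard ≤ Nat.card G := by
  calc S.ncard * T.ncard * U.ncard = Nat.card (S × T × U) := by
        simp only [Nat.card_prod, Nat.card_coe_set_eq, mul_assoc]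
    _ ≤ Nat.card G := Nat.card_le_card_of_injective _ h.injective_mul

theorem stmt_12 {G : Type*} [CommGroup G] [Finite G] (S T U : Set G)
    (hS : S.Nonempty) (hT : T.Nonempty) (hU : U.Nonempty) (h : TPP S T U) :
    S.ncard * T.ncard * U.ncard ≤ Nat.card G :=
  stmt_12_general S T U h
end

section
/- Let G be a finite group and (S, T, U) a TPP triple of nonempty finite subsets of G. Let A : G × G → ℂ and B : G × G → ℂ be arbitrary functions. For s ∈ S and u ∈ U, the coefficient of the group element s⁻¹u in the product (∑_{s'∈S, t∈T} A(s',t)·(s'⁻¹t)) · (∑_{t'∈T, u'∈U} B(t',u')·(t'⁻¹u')), computed in the group algebra ℂ[G], equals ∑_{t∈T} A(s,t)·B(t,u). -/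
open Pointwise

/-! The coefficient of `s⁻¹ * u` collects the products `A (s', t) * B (t', u')` with
`s'⁻¹ * t * (t'⁻¹ * u') = s⁻¹ * u`. Conjugating by `s` and `u⁻¹` turns this equation into
`(s * s'⁻¹) * (t * t'⁻¹) * (u' * u⁻¹) = 1`, so by the triple product property only the terms
with `s' = s`, `t' = t`, `u' = u` survive. -/

theorem TPP.inv_mul_mul_inv_mul_eq_iff {G : Type*} [Group G] {S T U : Set G} (h : TPP S T U)
    {s s' t t' u u' : G} (hs : s ∈ S) (hs' : s' ∈ S) (ht : t ∈ T) (ht' : t' ∈ T)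
    (hu : u ∈ U) (hu' : u' ∈ U) :
    s'⁻¹ * t * (t'⁻¹ * u') = s⁻¹ * u ↔ s' = s ∧ t' = t ∧ u' = u := by
  have hq := h (s * s'⁻¹) ⟨s, hs, s', hs', rfl⟩ (t * t'⁻¹) ⟨t, ht, t', ht', rfl⟩
    (u' * u⁻¹) ⟨u', hu', u, hu, rfl⟩
  have hconj : s * s'⁻¹ * (t * t'⁻¹) * (u' * u⁻¹) = s * (s'⁻¹ * t * (t'⁻¹ * u')) * u⁻¹ := by
    group
  rw [eq_inv_mul_iff_mul_eq, ← mul_inv_eq_one, ← hconj, hq, mul_inv_eq_one, mul_inv_eq_one,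
    mul_inv_eq_one, eq_comm (a := s), eq_comm (a := t)]

theorem MonoidAlgebra.coeff_sum_single_mul_sum_single {R M ι κ : Type*} [Semiring R] [Mul M]
    [DecidableEq M] (I : Finset ι) (J : Finset κ) (f : ι → M) (g : κ → M) (a : ι → R)
    (b : κ → R) (m : M) :
    ((∑ i ∈ I, single (f i) (a i)) * ∑ j ∈ J, single (g j) (b j)).coeff m =
      ∑ i ∈ I, ∑ j ∈ J, if f i * g j = m then a i * b j else 0 := by
  simp only [Finset.sum_mul, Finset.mul_sum, single_mul_single, coeff_sum, Finset.sum_apply',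
    coeff_single, Finsupp.single_apply]
  exact Finset.sum_comm

open MonoidAlgebra in
theorem stmt_13_general {G : Type*} [Group G] (S T U : Finset G)
    (h : TPP (S : Set G) (T : Set G) (U : Set G))
    (A B : G × G → ℂ) (s : G) (hs : s ∈ S) (u : G) (hu : u ∈ U) :
    ((∑ s' ∈ S, ∑ t ∈ T, MonoidAlgebra.single (s'⁻¹ * t) (A (s', t))) *
        (∑ t' ∈ T, ∑ u' ∈ U, MonoidAlgebra.single (t'⁻¹ * u') (B (t', u')))
        : MonoidAlgebra ℂ G).coeff (s⁻¹ * u) =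
      ∑ t ∈ T, A (s, t) * B (t, u) := by
  classical
  rw [← Finset.sum_product', ← Finset.sum_product', coeff_sum_single_mul_sum_single]
  calc _ = ∑ p ∈ S ×ˢ T, ∑ q ∈ T ×ˢ U,
        if p.1 = s ∧ q.1 = p.2 ∧ q.2 = u then A p * B q else 0 := by
        refine Finset.sum_congr rfl fun p hp => Finset.sum_congr rfl fun q hq => ?_
        rw [Finset.mem_product] at hp hq
        simp only [h.inv_mul_mul_inv_mul_eq_iff hs hp.1 hp.2 hq.1 hu hq.2, Prod.mk.eta]
    _ = ∑ t ∈ T, A (s, t) * B (t, u) := by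
        simp [Finset.sum_product, ite_and, hs, hu]

open MonoidAlgebra in
theorem stmt_13 {G : Type*} [Group G] [Finite G] (S T U : Finset G)
    (hS : S.Nonempty) (hT : T.Nonempty) (hU : U.Nonempty)
    (h : TPP (S : Set G) (T : Set G) (U : Set G))
    (A B : G × G → ℂ) (s : G) (hs : s ∈ S) (u : G) (hu : u ∈ U) :
    ((∑ s' ∈ S, ∑ t ∈ T, MonoidAlgebra.single (s'⁻¹ * t) (A (s', t))) *
        (∑ t' ∈ T, ∑ u' ∈ U, MonoidAlgebra.single (t'⁻¹ * u') (B (t', u')))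
        : MonoidAlgebra ℂ G).coeff (s⁻¹ * u) =
      ∑ t ∈ T, A (s, t) * B (t, u) :=
  stmt_13_general S T U h A B s hs u hu
end
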